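/- arXiv:2010.04585 — 3 statements merged into one kernel-verified Lean document; each statement's English description precedes it below -/
import Mathlib

section
/- The robustness of Buscemi nonlocality is convex: if M¹ = {M¹_ab} and M² = {M²_ab} are distributed measurements in R_BN (with the same dimensions and outcome numbers) and 0 ≤ p ≤ 1, then the family M = {p·M¹_ab + (1−p)·M²_ab} is a distributed measurement in R_BN and RoBN(M) ≤ p·RoBN(M¹) + (1−p)·RoBN(M²). -/
open Matrix BigOperators Kronecker ComplexOrder

noncomputable section

/-- Square complex matrices of size `n`. -/
abbrev Mat (n : ℕ) : Type := Matrix (Fin n) (Fin n) ℂ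

/-- Bipartite complex matrices on `ℂ^m ⊗ ℂ^n`. -/
abbrev BMat (m n : ℕ) : Type := Matrix (Fin m × Fin n) (Fin m × Fin n) ℂ

/-- A density matrix: positive semidefinite with unit trace. -/
def IsDensity {n : Type} [Fintype n] (ρ : Matrix n n ℂ) : Prop :=
  ρ.PosSemidef ∧ ρ.trace = 1

/-- A POVM: a finite family of positive semidefinite matrices summing to the identity. -/
def IsPOVM {ι n : Type} [Fintype ι] [Fintype n] [DecidableEq n]
    (M : ι → Matrix n n ℂ) : Prop :=
  (∀ i, (M i).PosSemidef) ∧ ∑ i, M i = 1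

/-- A separable bipartite operator: a finite convex combination of products of
density matrices. -/
def SepState {dA dB : ℕ} (ρ : BMat dA dB) : Prop :=
  ∃ (n : ℕ) (p : Fin n → ℝ) (ρA : Fin n → Mat dA) (ρB : Fin n → Mat dB),
    (∀ l, 0 ≤ p l) ∧ (∑ l, p l = 1) ∧
    (∀ l, IsDensity (ρA l)) ∧ (∀ l, IsDensity (ρB l)) ∧
    ρ = ∑ l, (p l : ℂ) • (ρA l ⊗ₖ ρB l)

/-- The element `tr_{A'B'}[(Ma ⊗ Mb)(1^A ⊗ ρ^{A'B'} ⊗ 1^B)]` of a distributed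
measurement (written out entrywise, after the canonical reordering of tensor factors). -/
def distMeas {dA dA' dB' dB : ℕ}
    (Ma : Matrix (Fin dA × Fin dA') (Fin dA × Fin dA') ℂ)
    (Mb : Matrix (Fin dB' × Fin dB) (Fin dB' × Fin dB) ℂ)
    (ρ : BMat dA' dB') : BMat dA dB :=
  Matrix.of fun pq rs =>
    ∑ k : Fin dA', ∑ l : Fin dB', ∑ k' : Fin dA', ∑ l' : Fin dB',
      Ma (pq.1, k) (rs.1, k') * Mb (l, pq.2) (l', rs.2) * ρ (k', l') (k, l)

/-- Membership in `R_BN`: the family arises from local POVMs and a shared state. -/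
def MemRBN {dA dB oA oB : ℕ} (M : Fin oA → Fin oB → BMat dA dB) : Prop :=
  ∃ (dA' dB' : ℕ)
    (Ma : Fin oA → Matrix (Fin dA × Fin dA') (Fin dA × Fin dA') ℂ)
    (Mb : Fin oB → Matrix (Fin dB' × Fin dB) (Fin dB' × Fin dB) ℂ)
    (ρ : BMat dA' dB'),
    IsPOVM Ma ∧ IsPOVM Mb ∧ IsDensity ρ ∧
    ∀ a b, M a b = distMeas (Ma a) (Mb b) ρ

/-- Membership in `F_BN`: the family arises from local POVMs and a separable shared state. -/
def MemFBN {dA dB oA oB : ℕ} (M : Fin oA → Fin oB → BMat dA dB) : Prop :=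
  ∃ (dA' dB' : ℕ)
    (Ma : Fin oA → Matrix (Fin dA × Fin dA') (Fin dA × Fin dA') ℂ)
    (Mb : Fin oB → Matrix (Fin dB' × Fin dB) (Fin dB' × Fin dB) ℂ)
    (ρ : BMat dA' dB'),
    IsPOVM Ma ∧ IsPOVM Mb ∧ IsDensity ρ ∧ SepState ρ ∧
    ∀ a b, M a b = distMeas (Ma a) (Mb b) ρ

/-- Robustness of Buscemi nonlocality. -/
def RoBN {dA dB oA oB : ℕ} (M : Fin oA → Fin oB → BMat dA dB) : ℝ :=
  sInf { r : ℝ | 0 ≤ r ∧ ∃ (N O : Fin oA → Fin oB → BMat dA dB),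
    MemRBN N ∧ MemFBN O ∧
    ∀ a b, M a b + (r : ℂ) • N a b = ((1 + r : ℝ) : ℂ) • O a b }

/-- Quantum simulation of a distributed measurement: shared randomness, local
pre-processing channels (given by Kraus operators) in the Heisenberg picture,
and classical post-processing of outcomes. -/
def Simulates {dA dB oA oB oA' oB' : ℕ}
    (M : Fin oA → Fin oB → BMat dA dB)
    (M' : Fin oA' → Fin oB' → BMat dA dB) : Prop :=
  ∃ (nL : ℕ) (pL : Fin nL → ℝ)
    (pA : Fin oA' → Fin oA → Fin nL → ℝ)
    (pB : Fin oB' → Fin oB → Fin nL → ℝ)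
    (kE : Fin nL → ℕ) (KE : (l : Fin nL) → Fin (kE l) → Mat dA)
    (kN : Fin nL → ℕ) (KN : (l : Fin nL) → Fin (kN l) → Mat dB),
    (∀ l, 0 ≤ pL l) ∧ (∑ l, pL l = 1) ∧
    (∀ a i l, 0 ≤ pA a i l) ∧ (∀ i l, ∑ a, pA a i l = 1) ∧
    (∀ b j l, 0 ≤ pB b j l) ∧ (∀ j l, ∑ b, pB b j l = 1) ∧
    (∀ l, ∑ s : Fin (kE l), (KE l s)ᴴ * KE l s = 1) ∧
    (∀ l, ∑ t : Fin (kN l), (KN l t)ᴴ * KN l t = 1) ∧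
    ∀ a b, M' a b = ∑ l : Fin nL, ∑ i : Fin oA, ∑ j : Fin oB,
      ((pL l * pA a i l * pB b j l : ℝ) : ℂ) •
        ∑ s : Fin (kE l), ∑ t : Fin (kN l),
          (KE l s ⊗ₖ KN l t)ᴴ * M i j * (KE l s ⊗ₖ KN l t)

/-- An ensemble of bipartite states: a probability distribution together with
density matrices. -/
def IsEnsemble {dA dB oA oB : ℕ} (p : Fin oA → Fin oB → ℝ)
    (σ : Fin oA → Fin oB → BMat dA dB) : Prop :=
  (∀ x y, 0 ≤ p x y) ∧ (∑ x, ∑ y, p x y = 1) ∧ ∀ x y, IsDensity (σ x y)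

/-- Guessing probability in distributed state discrimination with a distributed
measurement `M`. -/
def pDSD {dA dB oA oB : ℕ} (p : Fin oA → Fin oB → ℝ)
    (σ : Fin oA → Fin oB → BMat dA dB)
    (M : Fin oA → Fin oB → BMat dA dB) : ℝ :=
  sSup { v : ℝ | ∃ N : Fin oA → Fin oB → BMat dA dB, Simulates M N ∧
    v = ∑ x : Fin oA, ∑ y : Fin oB, p x y * ((N x y * σ x y).trace).re }

/-- Classical value of distributed state discrimination. -/
def pDSDc {dA dB oA oB : ℕ} (p : Fin oA → Fin oB → ℝ)
    (σ : Fin oA → Fin oB → BMat dA dB) : ℝ :=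
  sSup { v : ℝ | ∃ N : Fin oA → Fin oB → BMat dA dB, MemFBN N ∧ v = pDSD p σ N }

/-- The subchannel `ω ↦ tr_{AA'}[(Ma ⊗ 1^{B'})(ω ⊗ ρ^{A'B'})]` of a teleportation
instrument (written out entrywise). -/
def telep {dA dA' dB' : ℕ}
    (Ma : Matrix (Fin dA × Fin dA') (Fin dA × Fin dA') ℂ)
    (ρ : BMat dA' dB') (ω : Mat dA) : Mat dB' :=
  Matrix.of fun l l' =>
    ∑ i : Fin dA, ∑ k : Fin dA', ∑ i' : Fin dA, ∑ k' : Fin dA',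
      Ma (i, k) (i', k') * ω i' i * ρ (k', l) (k, l')

/-- Membership in `R_T`: the instrument is a teleportation instrument. -/
def MemRT {dA dB' oA : ℕ} (Λ : Fin oA → Mat dA → Mat dB') : Prop :=
  ∃ (dA' : ℕ) (Ma : Fin oA → Matrix (Fin dA × Fin dA') (Fin dA × Fin dA') ℂ)
    (ρ : BMat dA' dB'),
    IsPOVM Ma ∧ IsDensity ρ ∧ ∀ a ω, Λ a ω = telep (Ma a) ρ ω

/-- Membership in `F_T`: a teleportation instrument realizable with a separable state. -/
def MemFT {dA dB' oA : ℕ} (Λ : Fin oA → Mat dA → Mat dB') : Prop :=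
  ∃ (dA' : ℕ) (Ma : Fin oA → Matrix (Fin dA × Fin dA') (Fin dA × Fin dA') ℂ)
    (ρ : BMat dA' dB'),
    IsPOVM Ma ∧ IsDensity ρ ∧ SepState ρ ∧ ∀ a ω, Λ a ω = telep (Ma a) ρ ω

/-- Robustness of teleportation. -/
def RoT {dA dB' oA : ℕ} (Λ : Fin oA → Mat dA → Mat dB') : ℝ :=
  sInf { r : ℝ | 0 ≤ r ∧ ∃ (Ω Γ : Fin oA → Mat dA → Mat dB'),
    MemRT Ω ∧ MemFT Γ ∧
    ∀ a ω, Λ a ω + (r : ℂ) • Ω a ω = ((1 + r : ℝ) : ℂ) • Γ a ω }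

/-- Quantum simulation of a teleportation instrument:
`Φ_a = Σ_{i,λ} p(λ) p(a|i,λ) E_λ ∘ Λ_i ∘ N_λ` with channels given by Kraus operators. -/
def SimInstr {dA dB' o o' : ℕ} (Λ : Fin o → Mat dA → Mat dB')
    (Φ : Fin o' → Mat dA → Mat dB') : Prop :=
  ∃ (nL : ℕ) (pL : Fin nL → ℝ) (pA : Fin o' → Fin o → Fin nL → ℝ)
    (kN : Fin nL → ℕ) (KN : (l : Fin nL) → Fin (kN l) → Mat dA)
    (kE : Fin nL → ℕ) (KE : (l : Fin nL) → Fin (kE l) → Mat dB'),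
    (∀ l, 0 ≤ pL l) ∧ (∑ l, pL l = 1) ∧
    (∀ a i l, 0 ≤ pA a i l) ∧ (∀ i l, ∑ a, pA a i l = 1) ∧
    (∀ l, ∑ s : Fin (kN l), (KN l s)ᴴ * KN l s = 1) ∧
    (∀ l, ∑ t : Fin (kE l), (KE l t)ᴴ * KE l t = 1) ∧
    ∀ a ω, Φ a ω = ∑ l : Fin nL, ∑ i : Fin o,
      ((pL l * pA a i l : ℝ) : ℂ) •
        ∑ t : Fin (kE l),
          KE l t * Λ i (∑ s : Fin (kN l), KN l s * ω * (KN l s)ᴴ) * (KE l t)ᴴ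

/-- `(Φ ⊗ id^B)[σ]` for a map `Φ` acting on the first tensor factor. -/
def appFst {dA dB' dB : ℕ} (Φ : Mat dA → Mat dB') (σ : BMat dA dB) : BMat dB' dB :=
  Matrix.of fun pq rs =>
    Φ (Matrix.of fun i i' => σ (i, pq.2) (i', rs.2)) pq.1 rs.1

/-- Guessing probability in teleportation-assisted state discrimination with
instrument `Λ`. -/
def pTSD {dA dB' o dB oA oB : ℕ} (p : Fin oA → Fin oB → ℝ)
    (σ : Fin oA → Fin oB → BMat dA dB)
    (Λ : Fin o → Mat dA → Mat dB') : ℝ :=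
  sSup { v : ℝ | ∃ (Mb : Fin oB → Matrix (Fin dB' × Fin dB) (Fin dB' × Fin dB) ℂ)
      (Φ : Fin oA → Mat dA → Mat dB'),
    IsPOVM Mb ∧ SimInstr Λ Φ ∧
    v = ∑ x : Fin oA, ∑ y : Fin oB,
      p x y * ((Mb y * appFst (Φ x) (σ x y)).trace).re }

/-- Classical value of teleportation-assisted state discrimination. -/
def pTSDc (dB' : ℕ) {dA dB oA oB : ℕ} (p : Fin oA → Fin oB → ℝ)
    (σ : Fin oA → Fin oB → BMat dA dB) : ℝ :=
  sSup { v : ℝ | ∃ (o' : ℕ) (F : Fin o' → Mat dA → Mat dB'),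
    MemFT F ∧ v = pTSD p σ F }

/-- Generalized robustness of entanglement. -/
def RoE {dA dB : ℕ} (ρ : BMat dA dB) : ℝ :=
  sInf { r : ℝ | 0 ≤ r ∧ ∃ (η σ : BMat dA dB),
    IsDensity η ∧ IsDensity σ ∧ SepState σ ∧
    ρ + (r : ℂ) • η = ((1 + r : ℝ) : ℂ) • σ }

/-- Guessing probability in entanglement-assisted state discrimination with
shared state `ρ`. -/
def pESD {dA dB oA oB dA' dB' : ℕ} (p : Fin oA → Fin oB → ℝ)
    (σ : Fin oA → Fin oB → BMat dA dB) (ρ : BMat dA' dB') : ℝ :=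
  sSup { v : ℝ | ∃ (Ma : Fin oA → Matrix (Fin dA × Fin dA') (Fin dA × Fin dA') ℂ)
      (Mb : Fin oB → Matrix (Fin dB' × Fin dB) (Fin dB' × Fin dB) ℂ),
    IsPOVM Ma ∧ IsPOVM Mb ∧
    v = ∑ x : Fin oA, ∑ y : Fin oB,
      p x y * ((distMeas (Ma x) (Mb y) ρ * σ x y).trace).re }

/-- Classical value of entanglement-assisted state discrimination. -/
def pESDc {dA dB oA oB : ℕ} (p : Fin oA → Fin oB → ℝ)
    (σ : Fin oA → Fin oB → BMat dA dB) : ℝ :=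
  sSup { v : ℝ | ∃ (dA' dB' : ℕ) (ρ : BMat dA' dB'),
    IsDensity ρ ∧ SepState ρ ∧ v = pESD p σ ρ }

/-- Partial trace over the second tensor factor. -/
def ptraceSnd {m n : Type} [Fintype n] (M : Matrix (m × n) (m × n) ℂ) : Matrix m m ℂ :=
  Matrix.of fun i j => ∑ k : n, M (i, k) (j, k)

/-- Partial trace over the first tensor factor. -/
def ptraceFst {m n : Type} [Fintype m] (M : Matrix (m × n) (m × n) ℂ) : Matrix n n ℂ :=
  Matrix.of fun i j => ∑ k : m, M (k, i) (k, j)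

/-- Average score in a general no-signalling game with scoring function `V`. -/
def pV {dA dB oA oB nX nY : ℕ} (p : Fin nX → Fin nY → ℝ)
    (σ : Fin nX → Fin nY → BMat dA dB)
    (V : Fin oA → Fin oB → Fin nX → Fin nY → ℝ)
    (M : Fin oA → Fin oB → BMat dA dB) : ℝ :=
  ∑ a : Fin oA, ∑ b : Fin oB, ∑ x : Fin nX, ∑ y : Fin nY,
    p x y * ((M a b * σ x y).trace).re * V a b x y

/-- Min-accessible information of a channel, with base-2 logarithms. -/
def IaccMin {dA dB : ℕ} {out : Type} [Fintype out] [DecidableEq out]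
    (N : BMat dA dB → Matrix out out ℂ) : ℝ :=
  sSup { v : ℝ | ∃ (n m : ℕ) (p : Fin n → ℝ) (σ : Fin n → BMat dA dB)
      (D : Fin m → Matrix out out ℂ),
    (∀ x, 0 ≤ p x) ∧ (∑ x, p x = 1) ∧ (∀ x, IsDensity (σ x)) ∧ IsPOVM D ∧
    v = Real.logb 2 (∑ g : Fin m, ⨆ x : Fin n, p x * ((N (σ x) * D g).trace).re)
      - Real.logb 2 (⨆ x : Fin n, p x) }

/-!
Both `R_BN` and `F_BN` are convex. Given realizations with auxiliary systems `A'ᵢ, B'ᵢ`, POVMs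
`Aᵢ, Bᵢ` and states `ρᵢ`, Alice and Bob embed their auxiliary systems into the direct sums
`A'₁ ⊕ A'₂` and `B'₁ ⊕ B'₂`, measure the block sums `A₁ ⊕ A₂`, `B₁ ⊕ B₂`, and share the
block-diagonal state `p ρ₁ ⊕ (1 - p) ρ₂`, which is separable when both `ρᵢ` are. Because the state
has no off-diagonal blocks, the cross terms vanish and the realized measurement is the mixture.

Convexity of the robustness then only uses convexity of these two sets: mixing witnesses
`Mᵢ + rᵢ Nᵢ = (1 + rᵢ) Oᵢ` with weights `p, 1 - p` gives a witness for the mixture with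
`r = p r₁ + (1 - p) r₂`, since `p r₁ N₁ + (1 - p) r₂ N₂ ∈ r • R_BN` and likewise for `F_BN`.
-/

open Function Set

section PushMat

variable {α β : Type} [Fintype α] [DecidableEq β]

def inclMat (f : α → β) : Matrix β α ℂ := Matrix.of fun b a => if b = f a then 1 else 0

/-- Extension by zero of `M` along an injective `f`; the conjugated form keeps positivity. -/
def pushMat (f : α → β) (M : Matrix α α ℂ) : Matrix β β ℂ := inclMat f * M * (inclMat f)ᴴ

lemma pushMat_apply (f : α → β) (M : Matrix α α ℂ) (b b' : β) :
    pushMat f M b b' = ∑ a, ∑ a', if b = f a ∧ b' = f a' then M a a' else 0 := by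
  simp only [pushMat, Matrix.mul_apply, Matrix.conjTranspose_apply, inclMat, Matrix.of_apply,
    Finset.sum_mul]
  rw [Finset.sum_comm]
  refine Finset.sum_congr rfl fun a _ => Finset.sum_congr rfl fun a' _ => ?_
  by_cases h1 : b = f a <;> by_cases h2 : b' = f a' <;> simp [h1, h2]

lemma pushMat_apply_of_notMem_range_left {f : α → β} {b : β} (hb : b ∉ range f)
    (M : Matrix α α ℂ) (b' : β) : pushMat f M b b' = 0 := by
  rw [pushMat_apply]
  exact Finset.sum_eq_zero fun a _ => Finset.sum_eq_zero fun a' _ =>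
    if_neg fun h => hb ⟨a, h.1.symm⟩

lemma pushMat_apply_of_notMem_range_right {f : α → β} {b' : β} (hb' : b' ∉ range f)
    (M : Matrix α α ℂ) (b : β) : pushMat f M b b' = 0 := by
  rw [pushMat_apply]
  exact Finset.sum_eq_zero fun a _ => Finset.sum_eq_zero fun a' _ =>
    if_neg fun h => hb' ⟨a', h.2.symm⟩

lemma pushMat_apply_apply {f : α → β} (hf : Injective f) (M : Matrix α α ℂ) (a a' : α) :
    pushMat f M (f a) (f a') = M a a' := by
  rw [pushMat_apply, Fintype.sum_eq_single a, Fintype.sum_eq_single a', if_pos ⟨rfl, rfl⟩]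
  · exact fun x hx => if_neg fun h => hx (hf h.2).symm
  · exact fun x hx => Finset.sum_eq_zero fun y _ => if_neg fun h => hx (hf h.1).symm

lemma pushMat_one [DecidableEq α] {f : α → β} (hf : Injective f) :
    pushMat f 1 = Matrix.diagonal ((range f).indicator 1) := by
  ext b b'
  by_cases hb : b ∈ range f
  · by_cases hb' : b' ∈ range f
    · obtain ⟨a, rfl⟩ := hb
      obtain ⟨a', rfl⟩ := hb'
      simp [pushMat_apply_apply hf, Matrix.one_apply, Matrix.diagonal_apply, hf.eq_iff]
    · rw [pushMat_apply_of_notMem_range_right hb',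
        Matrix.diagonal_apply_ne _ (ne_of_mem_of_not_mem hb hb')]
  · rw [pushMat_apply_of_notMem_range_left hb, Matrix.diagonal_apply]
    simp [hb]

lemma pushMat_smul (f : α → β) (c : ℂ) (M : Matrix α α ℂ) :
    pushMat f (c • M) = c • pushMat f M := by
  simp [pushMat, Matrix.smul_mul, Matrix.mul_smul]

lemma pushMat_sum {ι : Type} (s : Finset ι) (f : α → β) (M : ι → Matrix α α ℂ) :
    pushMat f (∑ i ∈ s, M i) = ∑ i ∈ s, pushMat f (M i) := by
  simp [pushMat, Matrix.mul_sum, Matrix.sum_mul]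

lemma pushMat_kronecker {α' β' : Type} [Fintype α'] [DecidableEq β'] (g : α → β) (h : α' → β')
    (A : Matrix α α ℂ) (B : Matrix α' α' ℂ) :
    pushMat (Prod.map g h) (A ⊗ₖ B) = pushMat g A ⊗ₖ pushMat h B := by
  have hV : inclMat (Prod.map g h) = inclMat g ⊗ₖ inclMat h := by
    ext ⟨b, b'⟩ ⟨a, a'⟩
    simp only [inclMat, Matrix.of_apply, Matrix.kroneckerMap_apply, Prod.map_apply,
      Prod.mk.injEq, ite_zero_mul_ite_zero, mul_one]
  rw [pushMat, hV, Matrix.conjTranspose_kronecker, ← Matrix.mul_kronecker_mul,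
    ← Matrix.mul_kronecker_mul]
  rfl

variable [Fintype β]

lemma Matrix.PosSemidef.pushMat {M : Matrix α α ℂ} (hM : M.PosSemidef) (f : α → β) :
    (pushMat f M).PosSemidef :=
  hM.mul_mul_conjTranspose_same _

lemma trace_pushMat [DecidableEq α] {f : α → β} (hf : Injective f) (M : Matrix α α ℂ) :
    (pushMat f M).trace = M.trace := by
  have hV : (inclMat f)ᴴ * inclMat f = 1 := by
    ext a a'
    simp [inclMat, Matrix.mul_apply, Matrix.one_apply, hf.eq_iff, eq_comm]
  rw [pushMat, Matrix.trace_mul_cycle, hV, Matrix.one_mul]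

lemma IsDensity.pushMat [DecidableEq α] {f : α → β} (hf : Injective f)
    {ρ : Matrix α α ℂ} (hρ : IsDensity ρ) : IsDensity (pushMat f ρ) :=
  ⟨hρ.1.pushMat f, by rw [trace_pushMat hf, hρ.2]⟩

lemma IsPOVM.pushMat_add {ι α₂ : Type} [Fintype ι] [Fintype α₂] [DecidableEq α]
    [DecidableEq α₂] {f₁ : α → β} {f₂ : α₂ → β} (hf₁ : Injective f₁) (hf₂ : Injective f₂)
    (hf : IsCompl (range f₁) (range f₂)) {N₁ : ι → Matrix α α ℂ} {N₂ : ι → Matrix α₂ α₂ ℂ}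
    (hN₁ : IsPOVM N₁) (hN₂ : IsPOVM N₂) :
    IsPOVM fun i => pushMat f₁ (N₁ i) + pushMat f₂ (N₂ i) := by
  refine ⟨fun i => ((hN₁.1 i).pushMat f₁).add ((hN₂.1 i).pushMat f₂), ?_⟩
  rw [Finset.sum_add_distrib, ← pushMat_sum, ← pushMat_sum, hN₁.2, hN₂.2, pushMat_one hf₁,
    pushMat_one hf₂, ← hf.compl_eq, Matrix.diagonal_add, ← Matrix.diagonal_one]
  exact congrArg Matrix.diagonal (funext fun b => indicator_self_add_compl_apply _ _ b)

end PushMat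

section DistMeas

variable {dA dB eA eB : ℕ}

lemma distMeas_apply (Ma : Matrix (Fin dA × Fin eA) (Fin dA × Fin eA) ℂ)
    (Mb : Matrix (Fin eB × Fin dB) (Fin eB × Fin dB) ℂ) (ρ : BMat eA eB)
    (pq rs : Fin dA × Fin dB) :
    distMeas Ma Mb ρ pq rs = ∑ x : (Fin eA × Fin eB) × (Fin eA × Fin eB),
      Ma (pq.1, x.1.1) (rs.1, x.2.1) * Mb (x.1.2, pq.2) (x.2.2, rs.2) * ρ x.2 x.1 := by
  simp only [distMeas, Matrix.of_apply, Fintype.sum_prod_type]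

lemma distMeas_add_left (Ma Ma' : Matrix (Fin dA × Fin eA) (Fin dA × Fin eA) ℂ)
    (Mb : Matrix (Fin eB × Fin dB) (Fin eB × Fin dB) ℂ) (ρ : BMat eA eB) :
    distMeas (Ma + Ma') Mb ρ = distMeas Ma Mb ρ + distMeas Ma' Mb ρ := by
  ext pq rs
  simp only [distMeas_apply, Matrix.add_apply, add_mul, Finset.sum_add_distrib]

lemma distMeas_add_middle (Ma : Matrix (Fin dA × Fin eA) (Fin dA × Fin eA) ℂ)
    (Mb Mb' : Matrix (Fin eB × Fin dB) (Fin eB × Fin dB) ℂ) (ρ : BMat eA eB) :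
    distMeas Ma (Mb + Mb') ρ = distMeas Ma Mb ρ + distMeas Ma Mb' ρ := by
  ext pq rs
  simp only [distMeas_apply, Matrix.add_apply, mul_add, add_mul, Finset.sum_add_distrib]

lemma distMeas_add_right (Ma : Matrix (Fin dA × Fin eA) (Fin dA × Fin eA) ℂ)
    (Mb : Matrix (Fin eB × Fin dB) (Fin eB × Fin dB) ℂ) (ρ ρ' : BMat eA eB) :
    distMeas Ma Mb (ρ + ρ') = distMeas Ma Mb ρ + distMeas Ma Mb ρ' := by
  ext pq rs
  simp only [distMeas_apply, Matrix.add_apply, mul_add, Finset.sum_add_distrib]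

lemma distMeas_smul_right (Ma : Matrix (Fin dA × Fin eA) (Fin dA × Fin eA) ℂ)
    (Mb : Matrix (Fin eB × Fin dB) (Fin eB × Fin dB) ℂ) (c : ℝ) (ρ : BMat eA eB) :
    distMeas Ma Mb (c • ρ) = c • distMeas Ma Mb ρ := by
  ext pq rs
  simp only [distMeas_apply, Matrix.smul_apply, Finset.smul_sum, Complex.real_smul]
  exact Finset.sum_congr rfl fun x _ => by ring

variable {EA EB : ℕ}

lemma distMeas_pushMat {g : Fin eA → Fin EA} {h : Fin eB → Fin EB} (hg : Injective g)
    (hh : Injective h) (Ma : Matrix (Fin dA × Fin eA) (Fin dA × Fin eA) ℂ)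
    (Mb : Matrix (Fin eB × Fin dB) (Fin eB × Fin dB) ℂ) (ρ : BMat eA eB) :
    distMeas (pushMat (Prod.map id g) Ma) (pushMat (Prod.map h id) Mb)
      (pushMat (Prod.map g h) ρ) = distMeas Ma Mb ρ := by
  have hgh : Injective (Prod.map g h) := hg.prodMap hh
  ext pq rs
  rw [distMeas_apply, distMeas_apply]
  refine (Fintype.sum_of_injective (Prod.map (Prod.map g h) (Prod.map g h)) (hgh.prodMap hgh)
    _ _ (fun x hx => ?_) fun x => ?_).symm
  · obtain hx₁ | hx₂ : x.1 ∉ range (Prod.map g h) ∨ x.2 ∉ range (Prod.map g h) := by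
      by_contra! hx'
      obtain ⟨⟨u, hu⟩, ⟨v, hv⟩⟩ := hx'
      exact hx ⟨(u, v), Prod.ext hu hv⟩
    · rw [pushMat_apply_of_notMem_range_right hx₁, mul_zero]
    · rw [pushMat_apply_of_notMem_range_left hx₂, mul_zero]
  · have hA := pushMat_apply_apply (injective_id.prodMap hg) Ma (pq.1, x.1.1) (rs.1, x.2.1)
    have hB := pushMat_apply_apply (hh.prodMap injective_id) Mb (x.1.2, pq.2) (x.2.2, rs.2)
    simp only [Prod.map_apply, Prod.map_fst, Prod.map_snd, id_eq] at hA hB ⊢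
    rw [hA, hB, pushMat_apply_apply hgh]

variable {eA' eB' : ℕ} {g : Fin eA → Fin EA} {h : Fin eB → Fin EB} {g' : Fin eA' → Fin EA}
  {h' : Fin eB' → Fin EB}

lemma distMeas_pushMat_eq_zero_of_disjoint_left (hd : Disjoint (range g) (range g'))
    (Ma : Matrix (Fin dA × Fin eA) (Fin dA × Fin eA) ℂ)
    (Mb : Matrix (Fin EB × Fin dB) (Fin EB × Fin dB) ℂ) (ρ : BMat eA' eB') :
    distMeas (pushMat (Prod.map id g) Ma) Mb (pushMat (Prod.map g' h') ρ) = 0 := by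
  ext pq rs
  rw [distMeas_apply, Matrix.zero_apply]
  refine Finset.sum_eq_zero fun x _ => ?_
  by_cases hk : x.1.1 ∈ range g
  · have hx : x.1 ∉ range (Prod.map g' h') := fun ⟨u, hu⟩ =>
      hd.notMem_of_mem_left hk ⟨u.1, congrArg Prod.fst hu⟩
    rw [pushMat_apply_of_notMem_range_right hx, mul_zero]
  · have hx : (pq.1, x.1.1) ∉ range (Prod.map id g) := fun ⟨u, hu⟩ =>
      hk ⟨u.2, congrArg Prod.snd hu⟩
    rw [pushMat_apply_of_notMem_range_left hx, zero_mul, zero_mul]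

lemma distMeas_pushMat_eq_zero_of_disjoint_middle (hd : Disjoint (range h) (range h'))
    (Ma : Matrix (Fin dA × Fin EA) (Fin dA × Fin EA) ℂ)
    (Mb : Matrix (Fin eB × Fin dB) (Fin eB × Fin dB) ℂ) (ρ : BMat eA' eB') :
    distMeas Ma (pushMat (Prod.map h id) Mb) (pushMat (Prod.map g' h') ρ) = 0 := by
  ext pq rs
  rw [distMeas_apply, Matrix.zero_apply]
  refine Finset.sum_eq_zero fun x _ => ?_
  by_cases hl : x.1.2 ∈ range h
  · have hx : x.1 ∉ range (Prod.map g' h') := fun ⟨u, hu⟩ =>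
      hd.notMem_of_mem_left hl ⟨u.2, congrArg Prod.snd hu⟩
    rw [pushMat_apply_of_notMem_range_right hx, mul_zero]
  · have hx : (x.1.2, pq.2) ∉ range (Prod.map h id) := fun ⟨u, hu⟩ =>
      hl ⟨u.1, congrArg Prod.fst hu⟩
    rw [pushMat_apply_of_notMem_range_left hx, mul_zero, zero_mul]

end DistMeas

lemma isCompl_range_castAdd_natAdd (m n : ℕ) :
    IsCompl (range (Fin.castAdd n : Fin m → Fin (m + n))) (range (Fin.natAdd m)) := by
  have := isCompl_range_inl_range_inr.preimage (finSumFinEquiv.symm : Fin (m + n) → Fin m ⊕ Fin n)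
  rw [← Equiv.image_symm_eq_preimage, ← Equiv.image_symm_eq_preimage, Equiv.symm_symm,
    ← range_comp, ← range_comp] at this
  simpa [comp_def] using this

lemma IsCompl.range_prodMap_id_left {γ δ δ₁ δ₂ : Type} {g₁ : δ₁ → δ} {g₂ : δ₂ → δ}
    (h : IsCompl (range g₁) (range g₂)) :
    IsCompl (range (Prod.map (id : γ → γ) g₁)) (range (Prod.map (id : γ → γ) g₂)) := by
  simpa only [range_prodMap, range_id, univ_prod] using h.preimage Prod.snd

lemma IsCompl.range_prodMap_id_right {γ δ δ₁ δ₂ : Type} {g₁ : δ₁ → δ} {g₂ : δ₂ → δ}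
    (h : IsCompl (range g₁) (range g₂)) :
    IsCompl (range (Prod.map g₁ (id : γ → γ))) (range (Prod.map g₂ (id : γ → γ))) := by
  simpa only [range_prodMap, range_id, prod_univ] using h.preimage Prod.fst

lemma convex_setOf_isDensity {n : Type} [Fintype n] :
    Convex ℝ {ρ : Matrix n n ℂ | IsDensity ρ} := by
  rintro ρ₁ ⟨hpos₁, htr₁⟩ ρ₂ ⟨hpos₂, htr₂⟩ a b ha hb hab
  refine ⟨(hpos₁.smul ha).add (hpos₂.smul hb), ?_⟩
  rw [Matrix.trace_add, Matrix.trace_smul, Matrix.trace_smul, htr₁, htr₂, ← add_smul, hab,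
    one_smul]

lemma SepState.pushMat {m n m' n' : ℕ} {g : Fin m → Fin m'} {h : Fin n → Fin n'}
    (hg : Injective g) (hh : Injective h) {ρ : BMat m n} (hρ : SepState ρ) :
    SepState (pushMat (Prod.map g h) ρ) := by
  obtain ⟨k, p, ρA, ρB, hp, hp1, hA, hB, rfl⟩ := hρ
  exact ⟨k, p, _, _, hp, hp1, fun l => (hA l).pushMat hg, fun l => (hB l).pushMat hh,
    by simp only [pushMat_sum, pushMat_smul, pushMat_kronecker]⟩

lemma convex_setOf_sepState {dA dB : ℕ} : Convex ℝ {ρ : BMat dA dB | SepState ρ} := by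
  rintro _ ⟨n₁, p₁, ρA₁, ρB₁, hp₁, hs₁, hA₁, hB₁, rfl⟩ _ ⟨n₂, p₂, ρA₂, ρB₂, hp₂, hs₂, hA₂, hB₂, rfl⟩
    a b ha hb hab
  refine ⟨n₁ + n₂, Fin.append (a • p₁) (b • p₂), Fin.append ρA₁ ρA₂, Fin.append ρB₁ ρB₂,
    fun l => ?_, ?_, fun l => ?_, fun l => ?_, ?_⟩
  · refine Fin.addCases (fun i => ?_) (fun i => ?_) l
    · simpa using mul_nonneg ha (hp₁ i)
    · simpa using mul_nonneg hb (hp₂ i)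
  · simp [Fin.sum_univ_add, ← Finset.mul_sum, hs₁, hs₂, hab]
  · refine Fin.addCases (fun i => ?_) (fun i => ?_) l <;> simp [hA₁, hA₂]
  · refine Fin.addCases (fun i => ?_) (fun i => ?_) l <;> simp [hB₁, hB₂]
  · simp [Fin.sum_univ_add, Finset.smul_sum, Complex.coe_smul, smul_smul]

section BlockSum

variable {d e₁ e₂ : ℕ}

def blockSumSnd (A₁ : Matrix (Fin d × Fin e₁) (Fin d × Fin e₁) ℂ)
    (A₂ : Matrix (Fin d × Fin e₂) (Fin d × Fin e₂) ℂ) :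
    Matrix (Fin d × Fin (e₁ + e₂)) (Fin d × Fin (e₁ + e₂)) ℂ :=
  pushMat (Prod.map id (Fin.castAdd e₂)) A₁ + pushMat (Prod.map id (Fin.natAdd e₁)) A₂

def blockSumFst (B₁ : Matrix (Fin e₁ × Fin d) (Fin e₁ × Fin d) ℂ)
    (B₂ : Matrix (Fin e₂ × Fin d) (Fin e₂ × Fin d) ℂ) :
    Matrix (Fin (e₁ + e₂) × Fin d) (Fin (e₁ + e₂) × Fin d) ℂ :=
  pushMat (Prod.map (Fin.castAdd e₂) id) B₁ + pushMat (Prod.map (Fin.natAdd e₁) id) B₂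

variable {f₁ f₂ : ℕ}

def blockSumState (a b : ℝ) (ρ₁ : BMat e₁ f₁) (ρ₂ : BMat e₂ f₂) : BMat (e₁ + e₂) (f₁ + f₂) :=
  a • pushMat (Prod.map (Fin.castAdd e₂) (Fin.castAdd f₂)) ρ₁
    + b • pushMat (Prod.map (Fin.natAdd e₁) (Fin.natAdd f₁)) ρ₂

lemma distMeas_blockSum {dA dB : ℕ} (A₁ : Matrix (Fin dA × Fin e₁) (Fin dA × Fin e₁) ℂ)
    (A₂ : Matrix (Fin dA × Fin e₂) (Fin dA × Fin e₂) ℂ)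
    (B₁ : Matrix (Fin f₁ × Fin dB) (Fin f₁ × Fin dB) ℂ)
    (B₂ : Matrix (Fin f₂ × Fin dB) (Fin f₂ × Fin dB) ℂ) (a b : ℝ) (ρ₁ : BMat e₁ f₁)
    (ρ₂ : BMat e₂ f₂) :
    distMeas (blockSumSnd A₁ A₂) (blockSumFst B₁ B₂) (blockSumState a b ρ₁ ρ₂)
      = a • distMeas A₁ B₁ ρ₁ + b • distMeas A₂ B₂ ρ₂ := by
  have hA := (isCompl_range_castAdd_natAdd e₁ e₂).disjoint
  have hB := (isCompl_range_castAdd_natAdd f₁ f₂).disjoint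
  simp only [blockSumSnd, blockSumFst, blockSumState, distMeas_add_left, distMeas_add_middle,
    distMeas_add_right, distMeas_smul_right,
    distMeas_pushMat (Fin.castAdd_injective e₁ e₂) (Fin.castAdd_injective f₁ f₂),
    distMeas_pushMat (Fin.natAdd_injective e₂ e₁) (Fin.natAdd_injective f₂ f₁),
    distMeas_pushMat_eq_zero_of_disjoint_left hA, distMeas_pushMat_eq_zero_of_disjoint_left hA.symm,
    distMeas_pushMat_eq_zero_of_disjoint_middle hB,
    distMeas_pushMat_eq_zero_of_disjoint_middle hB.symm, add_zero, zero_add]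

variable {ι : Type} [Fintype ι]

lemma IsPOVM.blockSumSnd {A₁ : ι → Matrix (Fin d × Fin e₁) (Fin d × Fin e₁) ℂ}
    {A₂ : ι → Matrix (Fin d × Fin e₂) (Fin d × Fin e₂) ℂ} (h₁ : IsPOVM A₁) (h₂ : IsPOVM A₂) :
    IsPOVM fun i => blockSumSnd (A₁ i) (A₂ i) :=
  h₁.pushMat_add (injective_id.prodMap (Fin.castAdd_injective e₁ e₂))
    (injective_id.prodMap (Fin.natAdd_injective e₂ e₁))
    (isCompl_range_castAdd_natAdd e₁ e₂).range_prodMap_id_left h₂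

lemma IsPOVM.blockSumFst {B₁ : ι → Matrix (Fin e₁ × Fin d) (Fin e₁ × Fin d) ℂ}
    {B₂ : ι → Matrix (Fin e₂ × Fin d) (Fin e₂ × Fin d) ℂ} (h₁ : IsPOVM B₁) (h₂ : IsPOVM B₂) :
    IsPOVM fun i => blockSumFst (B₁ i) (B₂ i) :=
  h₁.pushMat_add ((Fin.castAdd_injective e₁ e₂).prodMap injective_id)
    ((Fin.natAdd_injective e₂ e₁).prodMap injective_id)
    (isCompl_range_castAdd_natAdd e₁ e₂).range_prodMap_id_right h₂

variable {a b : ℝ} {ρ₁ : BMat e₁ f₁} {ρ₂ : BMat e₂ f₂}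

lemma IsDensity.blockSumState (h₁ : IsDensity ρ₁) (h₂ : IsDensity ρ₂) (ha : 0 ≤ a) (hb : 0 ≤ b)
    (hab : a + b = 1) : IsDensity (blockSumState a b ρ₁ ρ₂) :=
  convex_setOf_isDensity
    (h₁.pushMat ((Fin.castAdd_injective e₁ e₂).prodMap (Fin.castAdd_injective f₁ f₂)))
    (h₂.pushMat ((Fin.natAdd_injective e₂ e₁).prodMap (Fin.natAdd_injective f₂ f₁))) ha hb hab

lemma SepState.blockSumState (h₁ : SepState ρ₁) (h₂ : SepState ρ₂) (ha : 0 ≤ a) (hb : 0 ≤ b)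
    (hab : a + b = 1) : SepState (blockSumState a b ρ₁ ρ₂) :=
  convex_setOf_sepState
    (h₁.pushMat (Fin.castAdd_injective e₁ e₂) (Fin.castAdd_injective f₁ f₂))
    (h₂.pushMat (Fin.natAdd_injective e₂ e₁) (Fin.natAdd_injective f₂ f₁)) ha hb hab

end BlockSum

theorem convex_setOf_memRBN {dA dB oA oB : ℕ} :
    Convex ℝ {M : Fin oA → Fin oB → BMat dA dB | MemRBN M} := by
  rintro M₁ ⟨e₁, f₁, A₁, B₁, ρ₁, hA₁, hB₁, hρ₁, hM₁⟩ M₂ ⟨e₂, f₂, A₂, B₂, ρ₂, hA₂, hB₂, hρ₂, hM₂⟩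
    a b ha hb hab
  refine ⟨e₁ + e₂, f₁ + f₂, _, _, _, hA₁.blockSumSnd hA₂, hB₁.blockSumFst hB₂,
    hρ₁.blockSumState hρ₂ ha hb hab, fun i j => ?_⟩
  simp only [distMeas_blockSum, Pi.add_apply, Pi.smul_apply, hM₁, hM₂]

theorem convex_setOf_memFBN {dA dB oA oB : ℕ} :
    Convex ℝ {M : Fin oA → Fin oB → BMat dA dB | MemFBN M} := by
  rintro M₁ ⟨e₁, f₁, A₁, B₁, ρ₁, hA₁, hB₁, hρ₁, hS₁, hM₁⟩
    M₂ ⟨e₂, f₂, A₂, B₂, ρ₂, hA₂, hB₂, hρ₂, hS₂, hM₂⟩ a b ha hb hab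
  refine ⟨e₁ + e₂, f₁ + f₂, _, _, _, hA₁.blockSumSnd hA₂, hB₁.blockSumFst hB₂,
    hρ₁.blockSumState hρ₂ ha hb hab, hS₁.blockSumState hS₂ ha hb hab, fun i j => ?_⟩
  simp only [distMeas_blockSum, Pi.add_apply, Pi.smul_apply, hM₁, hM₂]

lemma le_mul_csInf {s : Set ℝ} (hs : s.Nonempty) {a t : ℝ} (ha : 0 ≤ a)
    (h : ∀ x ∈ s, t ≤ a * x) : t ≤ a * sInf s := by
  rw [← smul_eq_mul, ← Real.sInf_smul_of_nonneg ha]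
  exact le_csInf hs.smul_set (by rintro _ ⟨x, hx, rfl⟩; exact h x hx)

section Robustness

variable {E : Type*} [AddCommGroup E] [Module ℝ E]

def robustnessSet (R F : Set E) (M : E) : Set ℝ :=
  {r | 0 ≤ r ∧ ∃ N ∈ R, ∃ O ∈ F, M + r • N = (1 + r) • O}

lemma sInf_robustnessSet_nonneg (R F : Set E) (M : E) : 0 ≤ sInf (robustnessSet R F M) :=
  Real.sInf_nonneg fun _ hr => hr.1

variable {R F : Set E} {M₁ M₂ : E} {a b : ℝ}

lemma combo_mem_robustnessSet (hR : Convex ℝ R) (hF : Convex ℝ F) (ha : 0 ≤ a) (hb : 0 ≤ b)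
    (hab : a + b = 1) {r₁ r₂ : ℝ} (h₁ : r₁ ∈ robustnessSet R F M₁)
    (h₂ : r₂ ∈ robustnessSet R F M₂) :
    a * r₁ + b * r₂ ∈ robustnessSet R F (a • M₁ + b • M₂) := by
  obtain ⟨hr₁, N₁, hN₁, O₁, hO₁, e₁⟩ := h₁
  obtain ⟨hr₂, N₂, hN₂, O₂, hO₂, e₂⟩ := h₂
  obtain ⟨N, hN, hN_eq⟩ :=
    hR.exists_mem_add_smul_eq hN₁ hN₂ (mul_nonneg ha hr₁) (mul_nonneg hb hr₂)
  obtain ⟨O, hO, hO_eq⟩ := hF.exists_mem_add_smul_eq hO₁ hO₂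
    (mul_nonneg ha (by linarith : 0 ≤ 1 + r₁)) (mul_nonneg hb (by linarith : 0 ≤ 1 + r₂))
  refine ⟨by positivity, N, hN, O, hO, ?_⟩
  have hsum : 1 + (a * r₁ + b * r₂) = a * (1 + r₁) + b * (1 + r₂) := by linear_combination -hab
  rw [hN_eq, hsum, hO_eq, mul_smul, mul_smul, mul_smul, mul_smul, ← e₁, ← e₂]
  module

lemma div_mem_robustnessSet_of_combo_mem (hR : Convex ℝ R) (hM₂ : M₂ ∈ R) (ha : 0 < a)
    (hb : 0 ≤ b) (hab : a + b = 1) {r : ℝ} (h : r ∈ robustnessSet R F (a • M₁ + b • M₂)) :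
    (b + r) / a ∈ robustnessSet R F M₁ := by
  obtain ⟨hr, N, hN, O, hO, e⟩ := h
  obtain ⟨N', hN', hN'_eq⟩ := hR.exists_mem_add_smul_eq hM₂ hN hb hr
  refine ⟨by positivity, N', hN', O, hO, ?_⟩
  have hcoef : 1 + (b + r) / a = a⁻¹ * (1 + r) := by field_simp; linarith
  rw [hcoef, mul_smul, ← e, add_assoc, ← hN'_eq]
  match_scalars <;> field_simp

theorem sInf_robustnessSet_combo_le (hR : Convex ℝ R) (hF : Convex ℝ F) (h₁ : M₁ ∈ R)
    (h₂ : M₂ ∈ R) (ha : 0 ≤ a) (hb : 0 ≤ b) (hab : a + b = 1) :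
    sInf (robustnessSet R F (a • M₁ + b • M₂))
      ≤ a * sInf (robustnessSet R F M₁) + b * sInf (robustnessSet R F M₂) := by
  rcases ha.eq_or_lt with rfl | ha
  · obtain rfl : b = 1 := by linarith
    simp
  rcases hb.eq_or_lt with rfl | hb
  · obtain rfl : a = 1 := by linarith
    simp
  -- `sInf ∅ = 0` in `ℝ`; a witness for the mixture yields witnesses for both components.
  rcases (robustnessSet R F (a • M₁ + b • M₂)).eq_empty_or_nonempty with hS | ⟨r, hr⟩
  · rw [hS, Real.sInf_empty]
    exact add_nonneg (mul_nonneg ha.le (sInf_robustnessSet_nonneg R F M₁))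
      (mul_nonneg hb.le (sInf_robustnessSet_nonneg R F M₂))
  have hS₁ : (robustnessSet R F M₁).Nonempty :=
    ⟨_, div_mem_robustnessSet_of_combo_mem hR h₂ ha hb.le hab hr⟩
  have hS₂ : (robustnessSet R F M₂).Nonempty :=
    ⟨_, div_mem_robustnessSet_of_combo_mem hR h₁ hb ha.le (by linarith)
      (by rwa [add_comm] at hr)⟩
  set S := robustnessSet R F (a • M₁ + b • M₂)
  have hbound : ∀ r₁ ∈ robustnessSet R F M₁, ∀ r₂ ∈ robustnessSet R F M₂,
      sInf S ≤ a * r₁ + b * r₂ := fun r₁ h₁ r₂ h₂ =>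
    csInf_le ⟨0, fun _ hr => hr.1⟩ (combo_mem_robustnessSet hR hF ha.le hb.le hab h₁ h₂)
  have hinf₁ : ∀ r₂ ∈ robustnessSet R F M₂,
      sInf S - b * r₂ ≤ a * sInf (robustnessSet R F M₁) := fun r₂ h₂ =>
    le_mul_csInf hS₁ ha.le fun r₁ h₁ => by linarith [hbound r₁ h₁ r₂ h₂]
  have hinf₂ : sInf S - a * sInf (robustnessSet R F M₁) ≤ b * sInf (robustnessSet R F M₂) :=
    le_mul_csInf hS₂ hb.le fun r₂ h₂ => by linarith [hinf₁ r₂ h₂]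
  linarith

end Robustness

lemma RoBN_eq_sInf_robustnessSet {dA dB oA oB : ℕ} (M : Fin oA → Fin oB → BMat dA dB) :
    RoBN M = sInf (robustnessSet {N | MemRBN N} {O | MemFBN O} M) := by
  simp only [RoBN, robustnessSet, funext_iff, Pi.add_apply, Pi.smul_apply, Complex.coe_smul,
    mem_ofPred_eq, exists_and_left]

/-- RoBN is convex: a probabilistic mixture of two distributed
measurements is a distributed measurement, and its RoBN is at most the mixture of
the RoBNs. -/
theorem robn_convex {dA dB oA oB : ℕ} (M₁ M₂ : Fin oA → Fin oB → BMat dA dB)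
    (h₁ : MemRBN M₁) (h₂ : MemRBN M₂) (p : ℝ) (hp0 : 0 ≤ p) (hp1 : p ≤ 1) :
    MemRBN (fun a b => (p : ℂ) • M₁ a b + ((1 - p : ℝ) : ℂ) • M₂ a b) ∧
    RoBN (fun a b => (p : ℂ) • M₁ a b + ((1 - p : ℝ) : ℂ) • M₂ a b) ≤
      p * RoBN M₁ + (1 - p) * RoBN M₂ := by
  have hmix : (fun a b => (p : ℂ) • M₁ a b + ((1 - p : ℝ) : ℂ) • M₂ a b)
      = p • M₁ + (1 - p) • M₂ := by
    funext a b
    simp only [Pi.add_apply, Pi.smul_apply, Complex.coe_smul]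
  have hq : 0 ≤ 1 - p := sub_nonneg.2 hp1
  have hsum : p + (1 - p) = 1 := add_sub_cancel p 1
  simp only [hmix, RoBN_eq_sInf_robustnessSet]
  exact ⟨convex_setOf_memRBN h₁ h₂ hp0 hq hsum,
    sInf_robustnessSet_combo_le convex_setOf_memRBN convex_setOf_memFBN h₁ h₂ hp0 hq hsum⟩
end
end

section
/- Fix a POVM {M_a^{AA'}} on ℂ^{d_A} ⊗ ℂ^{d_{A'}} and a density matrix ρ^{A'B'} on ℂ^{d_{A'}} ⊗ ℂ^{d_{B'}}, and let Λ^{A→B'} be the associated teleportation instrument. Then for every finite dimension d_B and every POVM {M_b^{B'B}} on ℂ^{d_{B'}} ⊗ ℂ^{d_B}, the distributed measurement M^{AB} with elements M_ab = tr_{A'B'}[(M_a^{AA'} ⊗ M_b^{B'B})(1^A ⊗ ρ^{A'B'} ⊗ 1^B)] satisfies RoBN(M^{AB}) ≤ RoT(Λ^{A→B'}). -/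
open Matrix BigOperators Kronecker ComplexOrder

noncomputable section

/-!
Bob's POVM turns an instrument into a distributed measurement linearly: entrywise, `M_ab` is a
fixed linear function of the values of `Λ_a` on matrix units. This map sends `R_T` into `R_BN`
and `F_T` into `F_BN`, so a decomposition `Λ + r Ω = (1 + r) Γ` witnessing `RoT(Λ) ≤ r` becomes
one witnessing `RoBN(M) ≤ r`.

Since `sInf ∅ = 0`, one also needs some decomposition of `Λ` to exist. As `ρ ≤ 1`, with
`d = d_{A'} d_{B'}` one has `ρ + d ρ' = (1 + d) 1/d` for the state `ρ' = (1 - ρ + 1/d) / d`,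
and the maximally mixed state `1/d` is separable.
-/

open scoped MatrixOrder

section Density

variable {n : Type} [Fintype n]

theorem IsDensity.nonempty {ρ : Matrix n n ℂ} (hρ : IsDensity ρ) : Nonempty n := by
  by_contra h
  rw [not_nonempty_iff] at h
  simpa [Matrix.trace] using hρ.2

variable [DecidableEq n]

theorem IsDensity.le_one {ρ : Matrix n n ℂ} (hρ : IsDensity ρ) : ρ ≤ 1 := by
  have hH := hρ.1.isHermitian
  refine CFC.le_one (R := ℝ) (fun x hx => ?_) hH.isSelfAdjoint
  obtain ⟨i, rfl⟩ := hH.spectrum_real_eq_range_eigenvalues ▸ hx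
  have htr : ∑ j, hH.eigenvalues j = 1 := by
    have h := hH.trace_eq_sum_eigenvalues.symm.trans hρ.2
    exact Complex.ofReal_eq_one.mp (by push_cast; exact h)
  exact htr ▸ Finset.single_le_sum (fun j _ => hρ.1.eigenvalues_nonneg j) (Finset.mem_univ i)

def maxMixed (n : Type) [Fintype n] [DecidableEq n] : Matrix n n ℂ :=
  (Fintype.card n : ℂ)⁻¹ • 1

theorem isDensity_maxMixed [Nonempty n] : IsDensity (maxMixed n) := by
  refine ⟨Matrix.PosSemidef.one.smul (by positivity), ?_⟩
  simp [maxMixed, Matrix.trace_smul]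

theorem IsDensity.exists_add_smul_eq_maxMixed {ρ : Matrix n n ℂ} (hρ : IsDensity ρ) :
    ∃ ρ' : Matrix n n ℂ, IsDensity ρ' ∧
      ρ + ((Fintype.card n : ℝ) : ℂ) • ρ' = ((1 + Fintype.card n : ℝ) : ℂ) • maxMixed n := by
  have := hρ.nonempty
  have hc : (Fintype.card n : ℂ) ≠ 0 := by simp
  refine ⟨(Fintype.card n : ℂ)⁻¹ • (1 - ρ + maxMixed n), ⟨?_, ?_⟩, ?_⟩
  · exact ((Matrix.le_iff.mp hρ.le_one).add isDensity_maxMixed.1).smul (by positivity)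
  · simp only [Matrix.trace_smul, Matrix.trace_add, Matrix.trace_sub, Matrix.trace_one, hρ.2,
      isDensity_maxMixed.2, smul_eq_mul]
    field_simp
    ring
  · ext i j
    by_cases hij : i = j <;> simp [maxMixed, hij]
    field_simp
    ring

end Density

theorem IsDensity.sepState_kronecker {dA dB : ℕ} {ρA : Mat dA} {ρB : Mat dB}
    (hA : IsDensity ρA) (hB : IsDensity ρB) : SepState (ρA ⊗ₖ ρB) :=
  ⟨1, fun _ => 1, fun _ => ρA, fun _ => ρB, fun _ => zero_le_one, by simp,
    fun _ => hA, fun _ => hB, by simp⟩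

theorem maxMixed_prod (m n : Type) [Fintype m] [DecidableEq m] [Fintype n] [DecidableEq n] :
    maxMixed (m × n) = maxMixed m ⊗ₖ maxMixed n := by
  simp [maxMixed, Matrix.smul_kronecker, Matrix.kronecker_smul, smul_smul, mul_comm]

theorem sepState_maxMixed {dA dB : ℕ} [Nonempty (Fin dA)] [Nonempty (Fin dB)] :
    SepState (maxMixed (Fin dA × Fin dB)) := by
  rw [maxMixed_prod]
  exact isDensity_maxMixed.sepState_kronecker isDensity_maxMixed

section Teleportation

variable {dA dA' dB' : ℕ} (Ma : Matrix (Fin dA × Fin dA') (Fin dA × Fin dA') ℂ)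

theorem telep_add (ρ₁ ρ₂ : BMat dA' dB') (ω : Mat dA) :
    telep Ma (ρ₁ + ρ₂) ω = telep Ma ρ₁ ω + telep Ma ρ₂ ω := by
  ext l l'
  simp [telep, mul_add, Finset.sum_add_distrib]

theorem telep_smul (c : ℂ) (ρ : BMat dA' dB') (ω : Mat dA) :
    telep Ma (c • ρ) ω = c • telep Ma ρ ω := by
  ext l l'
  simp [telep, Finset.mul_sum, mul_left_comm]

theorem telep_single (ρ : BMat dA' dB') (r p : Fin dA) (l l' : Fin dB') :
    telep Ma ρ (Matrix.single r p 1) l l' =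
      ∑ k : Fin dA', ∑ k' : Fin dA', Ma (p, k) (r, k') * ρ (k', l) (k, l') := by
  simp only [telep, Matrix.of_apply, Matrix.single_apply, mul_ite, mul_one, mul_zero, ite_mul,
    zero_mul, ite_and]
  rw [Finset.sum_comm]
  simp [Finset.sum_ite_eq, Finset.sum_ite_irrel]

end Teleportation

section DistributedMeasurement

variable {dA dB dB' : ℕ} (Mb : Matrix (Fin dB' × Fin dB) (Fin dB' × Fin dB) ℂ)

theorem distMeas_apply_s7 {dA' : ℕ} (Ma : Matrix (Fin dA × Fin dA') (Fin dA × Fin dA') ℂ)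
    (ρ : BMat dA' dB') (p r : Fin dA) (q s : Fin dB) :
    distMeas Ma Mb ρ (p, q) (r, s) =
      ∑ l : Fin dB', ∑ l' : Fin dB', Mb (l, q) (l', s) * telep Ma ρ (Matrix.single r p 1) l' l := by
  simp only [telep_single, distMeas, Matrix.of_apply, Finset.mul_sum]
  rw [Finset.sum_comm]
  refine Finset.sum_congr rfl fun l _ => ?_
  conv_rhs => rw [Finset.sum_comm]
  refine Finset.sum_congr rfl fun k _ => ?_
  conv_rhs => rw [Finset.sum_comm]
  refine Finset.sum_congr rfl fun k' _ => Finset.sum_congr rfl fun l' _ => ?_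
  ring

theorem distMeas_add_smul_eq_of_telep {d₁ d₂ d₃ : ℕ}
    {M₁ : Matrix (Fin dA × Fin d₁) (Fin dA × Fin d₁) ℂ} {ρ₁ : BMat d₁ dB'}
    {M₂ : Matrix (Fin dA × Fin d₂) (Fin dA × Fin d₂) ℂ} {ρ₂ : BMat d₂ dB'}
    {M₃ : Matrix (Fin dA × Fin d₃) (Fin dA × Fin d₃) ℂ} {ρ₃ : BMat d₃ dB'} {c d : ℂ}
    (h : ∀ ω, telep M₁ ρ₁ ω + c • telep M₂ ρ₂ ω = d • telep M₃ ρ₃ ω) :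
    distMeas M₁ Mb ρ₁ + c • distMeas M₂ Mb ρ₂ = d • distMeas M₃ Mb ρ₃ := by
  ext ⟨p, q⟩ ⟨r, s⟩
  have hentry : ∀ l' l, telep M₁ ρ₁ (Matrix.single r p 1) l' l +
      c * telep M₂ ρ₂ (Matrix.single r p 1) l' l = d * telep M₃ ρ₃ (Matrix.single r p 1) l' l :=
    fun l' l => by simpa using congrFun (congrFun (h (Matrix.single r p 1)) l') l
  simp only [Matrix.add_apply, Matrix.smul_apply, smul_eq_mul, distMeas_apply_s7, Finset.mul_sum,
    ← Finset.sum_add_distrib]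
  exact Finset.sum_congr rfl fun l _ => Finset.sum_congr rfl fun l' _ => by
    linear_combination Mb (l, q) (l', s) * hentry l' l

end DistributedMeasurement

section Robustness

variable {dA dA' dB' oA : ℕ} {Ma : Fin oA → Matrix (Fin dA × Fin dA') (Fin dA × Fin dA') ℂ}
  {ρ : BMat dA' dB'}

theorem exists_rot_decomposition_telep (hMa : IsPOVM Ma) (hρ : IsDensity ρ) :
    ∃ r : ℝ, 0 ≤ r ∧ ∃ Ω Γ : Fin oA → Mat dA → Mat dB', MemRT Ω ∧ MemFT Γ ∧
      ∀ a ω, telep (Ma a) ρ ω + (r : ℂ) • Ω a ω = ((1 + r : ℝ) : ℂ) • Γ a ω := by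
  obtain ⟨⟨k, l⟩⟩ := hρ.nonempty
  have : Nonempty (Fin dA') := ⟨k⟩
  have : Nonempty (Fin dB') := ⟨l⟩
  obtain ⟨ρ', hρ', hdecomp⟩ := hρ.exists_add_smul_eq_maxMixed
  refine ⟨Fintype.card (Fin dA' × Fin dB'), Nat.cast_nonneg _,
    fun a => telep (Ma a) ρ', fun a => telep (Ma a) (maxMixed _),
    ⟨dA', Ma, ρ', hMa, hρ', fun _ _ => rfl⟩,
    ⟨dA', Ma, _, hMa, isDensity_maxMixed, sepState_maxMixed, fun _ _ => rfl⟩, fun a ω => ?_⟩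
  rw [← telep_smul, ← telep_smul, ← telep_add, hdecomp]

theorem exists_robn_decomposition_distMeas {dB oB : ℕ}
    {Mb : Fin oB → Matrix (Fin dB' × Fin dB) (Fin dB' × Fin dB) ℂ} (hMb : IsPOVM Mb) {r : ℝ}
    {Ω Γ : Fin oA → Mat dA → Mat dB'} (hΩ : MemRT Ω) (hΓ : MemFT Γ)
    (h : ∀ a ω, telep (Ma a) ρ ω + (r : ℂ) • Ω a ω = ((1 + r : ℝ) : ℂ) • Γ a ω) :
    ∃ N O : Fin oA → Fin oB → BMat dA dB, MemRBN N ∧ MemFBN O ∧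
      ∀ a b, distMeas (Ma a) (Mb b) ρ + (r : ℂ) • N a b = ((1 + r : ℝ) : ℂ) • O a b := by
  obtain ⟨d₂, Na, ρN, hNa, hρN, hΩ⟩ := hΩ
  obtain ⟨d₃, Ga, ρG, hGa, hρG, hρG_sep, hΓ⟩ := hΓ
  refine ⟨fun a b => distMeas (Na a) (Mb b) ρN, fun a b => distMeas (Ga a) (Mb b) ρG,
    ⟨d₂, dB', Na, Mb, ρN, hNa, hMb, hρN, fun _ _ => rfl⟩,
    ⟨d₃, dB', Ga, Mb, ρG, hGa, hMb, hρG, hρG_sep, fun _ _ => rfl⟩, fun a b => ?_⟩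
  exact distMeas_add_smul_eq_of_telep (Mb b) fun ω => hΩ a ω ▸ hΓ a ω ▸ h a ω

end Robustness

/-- for every finite `d_B` and every POVM on Bob's side, the RoBN of
the resulting distributed measurement is at most the robustness of teleportation
of the instrument built from Alice's POVM and the shared state. -/
theorem robn_le_rot {dA dA' dB' oA : ℕ}
    (Ma : Fin oA → Matrix (Fin dA × Fin dA') (Fin dA × Fin dA') ℂ)
    (hMa : IsPOVM Ma) (ρ : BMat dA' dB') (hρ : IsDensity ρ)
    {dB oB : ℕ} (Mb : Fin oB → Matrix (Fin dB' × Fin dB) (Fin dB' × Fin dB) ℂ)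
    (hMb : IsPOVM Mb) :
    RoBN (fun a b => distMeas (Ma a) (Mb b) ρ) ≤
      RoT (fun a ω => telep (Ma a) ρ ω) := by
  refine csInf_le_csInf ⟨0, fun _ hr => hr.1⟩ (exists_rot_decomposition_telep hMa hρ) ?_
  rintro r ⟨hr, Ω, Γ, hΩ, hΓ, h⟩
  exact ⟨hr, exists_robn_decomposition_distMeas hMb hΩ hΓ h⟩
end
end

section
/- Replacing the equality constraint in the definition of RoBN by a semidefinite inequality does not change its value: for every distributed measurement M in R_BN, inf { r ≥ 0 : there exist {N_ab} ∈ R_BN and {O_ab} ∈ F_BN with (1+r)·O_ab − M_ab − r·N_ab positive semidefinite for all a, b } = RoBN(M). -/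
open Matrix BigOperators Kronecker ComplexOrder

noncomputable section

/-!
Every family in `R_BN` (hence every family in `F_BN`) sums to the identity: `distMeas` is
additive in each POVM argument and `distMeas 1 1 ρ = tr ρ • 1`. So for feasible `N`, `O` the
slacks `(1 + r) O_ab - M_ab - r N_ab` are positive semidefinite matrices summing to zero, and
therefore all vanish: the relaxed constraint already forces the equality constraint.
-/

open scoped MatrixOrder

section DistMeas

variable {dA dA' dB' dB : ℕ}

lemma distMeas_sum_left {ι : Type*} (s : Finset ι)
    (Ma : ι → Matrix (Fin dA × Fin dA') (Fin dA × Fin dA') ℂ)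
    (Mb : Matrix (Fin dB' × Fin dB) (Fin dB' × Fin dB) ℂ) (ρ : BMat dA' dB') :
    ∑ i ∈ s, distMeas (Ma i) Mb ρ = distMeas (∑ i ∈ s, Ma i) Mb ρ := by
  ext pq rs
  simp only [distMeas, Matrix.sum_apply, Matrix.of_apply, Finset.sum_mul]
  rw [Finset.sum_comm]; refine Finset.sum_congr rfl fun _ _ => ?_
  rw [Finset.sum_comm]; refine Finset.sum_congr rfl fun _ _ => ?_
  rw [Finset.sum_comm]; refine Finset.sum_congr rfl fun _ _ => ?_
  rw [Finset.sum_comm]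

lemma distMeas_sum_right {ι : Type*} (s : Finset ι)
    (Ma : Matrix (Fin dA × Fin dA') (Fin dA × Fin dA') ℂ)
    (Mb : ι → Matrix (Fin dB' × Fin dB) (Fin dB' × Fin dB) ℂ) (ρ : BMat dA' dB') :
    ∑ i ∈ s, distMeas Ma (Mb i) ρ = distMeas Ma (∑ i ∈ s, Mb i) ρ := by
  ext pq rs
  simp only [distMeas, Matrix.sum_apply, Matrix.of_apply, Finset.sum_mul, Finset.mul_sum]
  rw [Finset.sum_comm]; refine Finset.sum_congr rfl fun _ _ => ?_
  rw [Finset.sum_comm]; refine Finset.sum_congr rfl fun _ _ => ?_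
  rw [Finset.sum_comm]; refine Finset.sum_congr rfl fun _ _ => ?_
  rw [Finset.sum_comm]

lemma distMeas_one_one (ρ : BMat dA' dB') :
    distMeas (1 : Matrix (Fin dA × Fin dA') (Fin dA × Fin dA') ℂ)
      (1 : Matrix (Fin dB' × Fin dB) (Fin dB' × Fin dB) ℂ) ρ = ρ.trace • 1 := by
  ext ⟨p, q⟩ ⟨r, s⟩
  by_cases hp : p = r <;> by_cases hq : q = s <;>
    simp [distMeas, Matrix.one_apply, hp, hq, Matrix.trace, Fintype.sum_prod_type]

lemma sum_distMeas_eq_one {oA oB : ℕ}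
    {Ma : Fin oA → Matrix (Fin dA × Fin dA') (Fin dA × Fin dA') ℂ}
    {Mb : Fin oB → Matrix (Fin dB' × Fin dB) (Fin dB' × Fin dB) ℂ} {ρ : BMat dA' dB'}
    (hMa : IsPOVM Ma) (hMb : IsPOVM Mb) (hρ : IsDensity ρ) :
    ∑ a, ∑ b, distMeas (Ma a) (Mb b) ρ = 1 := by
  simp only [distMeas_sum_right, distMeas_sum_left, hMa.2, hMb.2, distMeas_one_one, hρ.2,
    one_smul]

end DistMeas

lemma MemRBN.sum_eq_one {dA dB oA oB : ℕ} {M : Fin oA → Fin oB → BMat dA dB}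
    (hM : MemRBN M) : ∑ a, ∑ b, M a b = 1 := by
  obtain ⟨_, _, Ma, Mb, ρ, hMa, hMb, hρ, hrep⟩ := hM
  simp only [hrep]
  exact sum_distMeas_eq_one hMa hMb hρ

lemma MemFBN.memRBN {dA dB oA oB : ℕ} {M : Fin oA → Fin oB → BMat dA dB}
    (hM : MemFBN M) : MemRBN M :=
  let ⟨dA', dB', Ma, Mb, ρ, hMa, hMb, hρ, _, hrep⟩ := hM
  ⟨dA', dB', Ma, Mb, ρ, hMa, hMb, hρ, hrep⟩

lemma posSemidef_slack_iff_eq_of_sum_eq_one {ι κ n : Type*} [Fintype ι] [Fintype κ] [Fintype n]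
    [DecidableEq n] {M N O : ι → κ → Matrix n n ℂ} (hM : ∑ a, ∑ b, M a b = 1)
    (hN : ∑ a, ∑ b, N a b = 1) (hO : ∑ a, ∑ b, O a b = 1) (r : ℝ) :
    (∀ a b, (((1 + r : ℝ) : ℂ) • O a b - M a b - (r : ℂ) • N a b).PosSemidef) ↔
      ∀ a b, M a b + (r : ℂ) • N a b = ((1 + r : ℝ) : ℂ) • O a b := by
  have hle : ∀ a b, (((1 + r : ℝ) : ℂ) • O a b - M a b - (r : ℂ) • N a b).PosSemidef ↔
      M a b + (r : ℂ) • N a b ≤ ((1 + r : ℝ) : ℂ) • O a b := by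
    intro a b
    rw [Matrix.le_iff, sub_sub]
  have hsum : ∑ p : ι × κ, (M p.1 p.2 + (r : ℂ) • N p.1 p.2)
      = ∑ p : ι × κ, ((1 + r : ℝ) : ℂ) • O p.1 p.2 := by
    simp only [Fintype.sum_prod_type, Finset.sum_add_distrib, ← Finset.smul_sum, hM, hN, hO]
    rw [Complex.ofReal_add, Complex.ofReal_one, add_smul, one_smul]
  constructor
  · intro h a b
    have hall := (Finset.sum_eq_sum_iff_of_le (s := Finset.univ)
      (f := fun p : ι × κ => M p.1 p.2 + (r : ℂ) • N p.1 p.2)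
      (g := fun p : ι × κ => ((1 + r : ℝ) : ℂ) • O p.1 p.2)
      fun p _ => (hle p.1 p.2).mp (h p.1 p.2)).mp hsum
    exact hall (a, b) (Finset.mem_univ _)
  · intro h a b
    exact (hle a b).mpr (h a b).le

/-- relaxing the equality constraint in the definition of RoBN to a
semidefinite inequality does not change its value. -/
theorem robn_relaxed_eq {dA dB oA oB : ℕ}
    (M : Fin oA → Fin oB → BMat dA dB) (hM : MemRBN M) :
    sInf { r : ℝ | 0 ≤ r ∧ ∃ (N O : Fin oA → Fin oB → BMat dA dB),
      MemRBN N ∧ MemFBN O ∧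
      ∀ a b, (((1 + r : ℝ) : ℂ) • O a b - M a b - (r : ℂ) • N a b).PosSemidef } =
    RoBN M := by
  unfold RoBN
  congr 1
  ext r
  refine and_congr_right fun _ => exists₂_congr fun N O => ?_
  refine and_congr_right fun hN => and_congr_right fun hO => ?_
  exact posSemidef_slack_iff_eq_of_sum_eq_one hM.sum_eq_one hN.sum_eq_one
    hO.memRBN.sum_eq_one r
end
end
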